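/- (Theorem 2, closed-loop platoon stability.) Let τ > 0, let A be the 3×3 real matrix with rows (0,1,0), (0,0,1), (0,0,−1/τ), B₁ = B₂ = (0,0,1/τ)ᵀ, C₁ = (1,0,0). Suppose M = V·Λ·V⁻¹ where V is an invertible N×N real matrix and Λ = diag(λ₁,…,λ_N) with every λ_i > 0, and let λ_min = min_i λ_i. Let γ_d > 0, α > 0 and let Q be a symmetric positive definite 3×3 real matrix such that the 5×5 block matrix [[AQ + QAᵀ − α·B₁B₁ᵀ, B₂, QC₁ᵀ],[B₂ᵀ, −γ_d², 0],[C₁Q, 0, −1]] is negative definite. Define kᵀ = (1/2)·B₁ᵀ·Q⁻¹ and let c ∈ ℝ satisfy c·λ_min ≥ α. Then every eigenvalue of the closed-loop matrix A_c = I_N ⊗ A − c·M ⊗ (B₁kᵀ) has negative real part, and for every real ω and every i, the unique entry g_i(iω) of the 1×1 complex matrix C₁·(iω·I₃ − A + cλ_i·B₁kᵀ)⁻¹·B₂ satisfies |g_i(iω)| < γ_d. -/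

import Mathlib

open Matrix Polynomial
open scoped Kronecker

namespace Stmt15

variable {m n l o : Type*}

lemma cmap_mul [Fintype n] (M : Matrix m n ℝ) (N : Matrix n l ℝ) :
    (M * N).map (Complex.ofReal : ℝ → ℂ) = M.map Complex.ofReal * N.map Complex.ofReal := by
  ext i j
  simp [Matrix.mul_apply, Matrix.map_apply]

lemma cmap_add (M N : Matrix m n ℝ) :
    (M + N).map (Complex.ofReal : ℝ → ℂ) = M.map Complex.ofReal + N.map Complex.ofReal := by
  ext i j; simp

lemma cmap_sub (M N : Matrix m n ℝ) :
    (M - N).map (Complex.ofReal : ℝ → ℂ) = M.map Complex.ofReal - N.map Complex.ofReal := by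
  ext i j; simp

lemma cmap_smul (r : ℝ) (M : Matrix m n ℝ) :
    (r • M).map (Complex.ofReal : ℝ → ℂ) = (r : ℂ) • M.map Complex.ofReal := by
  ext i j; simp

lemma cmap_one [DecidableEq n] :
    (1 : Matrix n n ℝ).map (Complex.ofReal : ℝ → ℂ) = 1 := by
  ext i j; by_cases h : i = j <;> simp [Matrix.one_apply, h]

lemma cmap_transpose (M : Matrix m n ℝ) :
    (Mᵀ).map (Complex.ofReal : ℝ → ℂ) = (M.map Complex.ofReal)ᵀ := by
  ext i j; simp

lemma star_cmap_mulVec [Fintype n] (S : Matrix m n ℝ) (u : n → ℂ) :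
    star (S.map (Complex.ofReal : ℝ → ℂ) *ᵥ u) = S.map Complex.ofReal *ᵥ star u := by
  funext a
  simp [Matrix.mulVec, dotProduct, Matrix.map_apply, star_sum]

lemma mulVec_dot_comm [Fintype m] [Fintype n] (M : Matrix n m ℂ) (a : m → ℂ) (w : n → ℂ) :
    (M *ᵥ a) ⬝ᵥ w = a ⬝ᵥ (Mᵀ *ᵥ w) := by
  rw [Matrix.dotProduct_mulVec, Matrix.vecMul_transpose]

lemma mulVec_dot_commR [Fintype m] [Fintype n] (M : Matrix n m ℝ) (a : m → ℝ) (w : n → ℝ) :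
    (M *ᵥ a) ⬝ᵥ w = a ⬝ᵥ (Mᵀ *ᵥ w) := by
  rw [Matrix.dotProduct_mulVec, Matrix.vecMul_transpose]

lemma conj_dot_real [Fintype n] (r : n → ℝ) (x : n → ℂ) :
    star x ⬝ᵥ (fun a => ((r a : ℝ) : ℂ)) = starRingEnd ℂ ((fun a => ((r a : ℝ) : ℂ)) ⬝ᵥ x) := by
  simp only [dotProduct, map_sum]
  refine Finset.sum_congr rfl fun a _ => ?_
  simp [mul_comm]

lemma re_form [Fintype n] (S : Matrix n n ℝ) (u : n → ℂ) :
    (star u ⬝ᵥ (S.map (Complex.ofReal : ℝ → ℂ) *ᵥ u)).re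
      = (fun a => (u a).re) ⬝ᵥ (S *ᵥ fun a => (u a).re)
        + (fun a => (u a).im) ⬝ᵥ (S *ᵥ fun a => (u a).im) := by
  simp only [dotProduct, Matrix.mulVec, Finset.mul_sum, Complex.re_sum,
    ← Finset.sum_add_distrib]
  refine Finset.sum_congr rfl fun a _ => ?_
  refine Finset.sum_congr rfl fun b _ => ?_
  simp [Complex.mul_re, Complex.mul_im, Matrix.map_apply]

lemma neg_form [Fintype n] {S : Matrix n n ℝ} (h : (-S).PosDef) {u : n → ℂ} (hu : u ≠ 0) :
    (star u ⬝ᵥ (S.map (Complex.ofReal : ℝ → ℂ) *ᵥ u)).re < 0 := by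
  rw [re_form]
  set x : n → ℝ := fun a => (u a).re with hx
  set y : n → ℝ := fun a => (u a).im with hy
  have hxy : x ≠ 0 ∨ y ≠ 0 := by
    by_contra hc
    push_neg at hc
    apply hu
    funext a
    have h1 := congrFun hc.1 a
    have h2 := congrFun hc.2 a
    simp [hx, hy] at h1 h2
    exact Complex.ext h1 h2
  have key : ∀ w : n → ℝ, w ⬝ᵥ (S *ᵥ w) ≤ 0 := by
    intro w
    have := h.posSemidef.dotProduct_mulVec_nonneg w
    simp only [Matrix.neg_mulVec, dotProduct_neg, star_trivial] at this
    linarith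
  have keys : ∀ w : n → ℝ, w ≠ 0 → w ⬝ᵥ (S *ᵥ w) < 0 := by
    intro w hw
    have := h.dotProduct_mulVec_pos hw
    simp only [Matrix.neg_mulVec, dotProduct_neg, star_trivial] at this
    linarith
  rcases hxy with hx0 | hy0
  · have := keys x hx0; have := key y; linarith
  · have := keys y hy0; have := key x; linarith

lemma pos_form [Fintype n] {S : Matrix n n ℝ} (h : S.PosDef) {u : n → ℂ} (hu : u ≠ 0) :
    0 < (star u ⬝ᵥ (S.map (Complex.ofReal : ℝ → ℂ) *ᵥ u)).re := by
  have := neg_form (S := -S) (by simpa using h) hu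
  have hmap : (-S).map (Complex.ofReal : ℝ → ℂ) = -(S.map Complex.ofReal) := by
    ext i j; simp
  rw [hmap, Matrix.neg_mulVec, dotProduct_neg] at this
  simp only [Complex.neg_re] at this
  linarith

lemma charpoly_eval [Fintype n] [DecidableEq n] (M : Matrix n n ℂ) (z : ℂ) :
    M.charpoly.eval z = (z • (1 : Matrix n n ℂ) - M).det := by
  rw [Matrix.charpoly, eval_det, matPolyEquiv_charmatrix]
  congr 1
  rw [eval_sub, eval_X, eval_C]
  congr 1
  simp [Matrix.scalar, Matrix.smul_one_eq_diagonal]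

lemma cmap_zero : (0 : Matrix m n ℝ).map (Complex.ofReal : ℝ → ℂ) = 0 := by
  ext i j; simp

lemma cmap_fromColumns (B : Matrix m n ℝ) (C : Matrix m o ℝ) :
    (Matrix.fromCols B C).map (Complex.ofReal : ℝ → ℂ)
      = Matrix.fromCols (B.map Complex.ofReal) (C.map Complex.ofReal) := by
  ext i (j | j) <;> simp [Matrix.fromCols_apply_inl, Matrix.fromCols_apply_inr]

lemma cmap_fromRows (B : Matrix m l ℝ) (C : Matrix n l ℝ) :
    (Matrix.fromRows B C).map (Complex.ofReal : ℝ → ℂ)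
      = Matrix.fromRows (B.map Complex.ofReal) (C.map Complex.ofReal) := by
  ext (i | i) j <;> simp [Matrix.fromRows_apply_inl, Matrix.fromRows_apply_inr]

lemma sum_elim_add {m n : Type*} (a c : m → ℂ) (b d : n → ℂ) :
    Sum.elim a b + Sum.elim c d = Sum.elim (a + c) (b + d) := by
  funext i
  cases i <;> simp

end Stmt15

open Stmt15

set_option maxHeartbeats 2000000 in
/-- Theorem 2 (closed-loop platoon stability): under the synthesis LMI, with
`kᵀ = ½ B₁ᵀ Q⁻¹` and coupling strength `c` with `c λ_min ≥ α`, the closed-loop matrix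
`A_c = I_N ⊗ A - c M ⊗ (B₁kᵀ)` is Hurwitz and every decoupled transfer function
satisfies `|gᵢ(iω)| < γ_d`. -/
theorem stmt_15 (τ : ℝ) (hτ : 0 < τ) (N : ℕ)
    (A : Matrix (Fin 3) (Fin 3) ℝ) (hA : A = !![0, 1, 0; 0, 0, 1; 0, 0, -(1 / τ)])
    (B1 B2 : Matrix (Fin 3) (Fin 1) ℝ) (hB1 : B1 = !![0; 0; 1 / τ]) (hB2 : B2 = B1)
    (C1 : Matrix (Fin 1) (Fin 3) ℝ) (hC1 : C1 = !![1, 0, 0])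
    (V : Matrix (Fin N) (Fin N) ℝ) (hV : IsUnit V.det)
    (lam : Fin N → ℝ) (hlam : ∀ i, 0 < lam i)
    (M : Matrix (Fin N) (Fin N) ℝ) (hM : M = V * Matrix.diagonal lam * V⁻¹)
    (lammin : ℝ) (hlammin : (∃ i, lam i = lammin) ∧ ∀ i, lammin ≤ lam i)
    (γd α : ℝ) (hγd : 0 < γd) (hα : 0 < α)
    (Q : Matrix (Fin 3) (Fin 3) ℝ) (hQ : Q.PosDef)
    (LMI : Matrix (Fin 3 ⊕ (Fin 1 ⊕ Fin 1)) (Fin 3 ⊕ (Fin 1 ⊕ Fin 1)) ℝ)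
    (hLMI : LMI = Matrix.fromBlocks
      (A * Q + Q * Aᵀ - α • (B1 * B1ᵀ)) (Matrix.fromCols B2 (Q * C1ᵀ))
      (Matrix.fromRows B2ᵀ (C1 * Q))
      (Matrix.fromBlocks (-(γd ^ 2) • (1 : Matrix (Fin 1) (Fin 1) ℝ)) 0 0
        (-1 : Matrix (Fin 1) (Fin 1) ℝ)))
    (hneg : (-LMI).PosDef)
    (kT : Matrix (Fin 1) (Fin 3) ℝ) (hkT : kT = (1 / 2 : ℝ) • (B1ᵀ * Q⁻¹))
    (c : ℝ) (hc : α ≤ c * lammin)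
    (Ac : Matrix (Fin N × Fin 3) (Fin N × Fin 3) ℝ)
    (hAc : Ac = (1 : Matrix (Fin N) (Fin N) ℝ) ⊗ₖ A - c • (M ⊗ₖ (B1 * kT))) :
    (∀ z : ℂ, (Ac.charpoly.map (algebraMap ℝ ℂ)).IsRoot z → z.re < 0) ∧
    ∀ (ω : ℝ) (i : Fin N),
      IsUnit ((Complex.I * (ω : ℂ)) • (1 : Matrix (Fin 3) (Fin 3) ℂ) -
        A.map (Complex.ofReal : ℝ → ℂ) +
        (c * lam i) • (B1 * kT).map (Complex.ofReal : ℝ → ℂ)).det ∧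
      ‖(C1.map (Complex.ofReal : ℝ → ℂ) *
        ((Complex.I * (ω : ℂ)) • (1 : Matrix (Fin 3) (Fin 3) ℂ) -
          A.map (Complex.ofReal : ℝ → ℂ) +
          (c * lam i) • (B1 * kT).map (Complex.ofReal : ℝ → ℂ))⁻¹ *
        B2.map (Complex.ofReal : ℝ → ℂ)) 0 0‖ < γd := by
  obtain ⟨⟨i0, hi0⟩, hlmle⟩ := hlammin
  have hlmpos : 0 < lammin := hi0 ▸ hlam i0
  have hcpos : 0 < c := by nlinarith
  -- basic facts about Q and P
  have hQd : IsUnit Q.det := isUnit_iff_ne_zero.mpr (ne_of_gt hQ.det_pos)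
  have hQsym : Qᵀ = Q := by
    have h := hQ.isHermitian
    ext i j
    have := congrFun (congrFun h i) j
    simpa [Matrix.conjTranspose_apply] using this
  set P : Matrix (Fin 3) (Fin 3) ℝ := Q⁻¹ with hPdef
  have hP : P.PosDef := hQ.inv
  have hQP : Q * P = 1 := Matrix.mul_nonsing_inv Q hQd
  have hPQ : P * Q = 1 := Matrix.nonsing_inv_mul Q hQd
  have hPsym : Pᵀ = P := by rw [hPdef, Matrix.transpose_nonsing_inv, hQsym]
  set K : Matrix (Fin 3) (Fin 3) ℝ := B1 * kT with hKdef
  have hkTQ : kT * Q = (1 / 2 : ℝ) • B1ᵀ := by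
    rw [hkT, Matrix.smul_mul, Matrix.mul_assoc, hPQ, Matrix.mul_one]
  have hKQ : K * Q = (1 / 2 : ℝ) • (B1 * B1ᵀ) := by
    rw [hKdef, Matrix.mul_assoc, hkTQ, Matrix.mul_smul]
  have hQKT : Q * Kᵀ = (1 / 2 : ℝ) • (B1 * B1ᵀ) := by
    have h1 : Kᵀ = (1 / 2 : ℝ) • (P * B1 * B1ᵀ) := by
      rw [hKdef, Matrix.transpose_mul, hkT, Matrix.transpose_smul, Matrix.transpose_mul,
        Matrix.transpose_transpose, hPsym, Matrix.smul_mul]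
    rw [h1, Matrix.mul_smul, ← Matrix.mul_assoc, ← Matrix.mul_assoc, hQP, Matrix.one_mul]
  -- the decoupled matrices and shifted LMIs
  set μ : Fin N → ℝ := fun i => c * lam i with hμdef
  have hμα : ∀ i, α ≤ μ i := by
    intro i
    have h1 : c * lammin ≤ c * lam i := by nlinarith [hlmle i]
    calc α ≤ c * lammin := hc
    _ ≤ μ i := h1
  set Ai : Fin N → Matrix (Fin 3) (Fin 3) ℝ := fun i => A - μ i • K with hAidef
  set Ei : Fin N → Matrix (Fin 3 ⊕ (Fin 1 ⊕ Fin 1)) (Fin 3 ⊕ (Fin 1 ⊕ Fin 1)) ℝ :=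
    fun i => Matrix.fromBlocks (-(μ i - α) • (B1 * B1ᵀ)) 0 0 0 with hEidef
  set Li : Fin N → Matrix (Fin 3 ⊕ (Fin 1 ⊕ Fin 1)) (Fin 3 ⊕ (Fin 1 ⊕ Fin 1)) ℝ :=
    fun i => LMI + Ei i with hLidef
  have hLi : ∀ i, Li i = Matrix.fromBlocks (Ai i * Q + Q * (Ai i)ᵀ)
      (Matrix.fromCols B2 (Q * C1ᵀ)) (Matrix.fromRows B2ᵀ (C1 * Q))
      (Matrix.fromBlocks (-(γd ^ 2) • (1 : Matrix (Fin 1) (Fin 1) ℝ)) 0 0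
        (-1 : Matrix (Fin 1) (Fin 1) ℝ)) := by
    intro i
    have hblock : (A * Q + Q * Aᵀ - α • (B1 * B1ᵀ)) + (-(μ i - α)) • (B1 * B1ᵀ)
        = Ai i * Q + Q * (Ai i)ᵀ := by
      have : Ai i * Q + Q * (Ai i)ᵀ
          = A * Q + Q * Aᵀ - μ i • ((1 / 2 : ℝ) • (B1 * B1ᵀ)) - μ i • ((1 / 2 : ℝ) • (B1 * B1ᵀ)) := by
        show (A - μ i • K) * Q + Q * (A - μ i • K)ᵀ = _
        rw [Matrix.sub_mul, Matrix.transpose_sub, Matrix.mul_sub, Matrix.transpose_smul,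
          Matrix.smul_mul, Matrix.mul_smul, hKQ, hQKT]
        module
      rw [this]
      module
    rw [hLidef]
    simp only [hEidef, hLMI]
    rw [Matrix.fromBlocks_add, hblock]
    simp
  -- negative semidefinite shift
  have hEform : ∀ (i : Fin N) (w : Fin 3 ⊕ (Fin 1 ⊕ Fin 1) → ℝ), w ⬝ᵥ (Ei i *ᵥ w) ≤ 0 := by
    intro i w
    rw [hEidef]
    rw [← Sum.elim_comp_inl_inr w, Matrix.fromBlocks_mulVec, sumElim_dotProduct_sumElim]
    simp only [Sum.elim_comp_inl, Sum.elim_comp_inr, Matrix.zero_mulVec, add_zero, zero_add,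
      dotProduct_zero]
    have hBB : (w ∘ Sum.inl) ⬝ᵥ ((B1 * B1ᵀ) *ᵥ (w ∘ Sum.inl))
        = (B1ᵀ *ᵥ (w ∘ Sum.inl)) ⬝ᵥ (B1ᵀ *ᵥ (w ∘ Sum.inl)) := by
      rw [← Matrix.mulVec_mulVec, Matrix.dotProduct_mulVec, ← Matrix.mulVec_transpose]
    have hnn : 0 ≤ (w ∘ Sum.inl) ⬝ᵥ ((B1 * B1ᵀ) *ᵥ (w ∘ Sum.inl)) := by
      rw [hBB]
      exact Finset.sum_nonneg fun j _ => mul_self_nonneg _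
    rw [Matrix.smul_mulVec, dotProduct_smul]
    have h0 : 0 ≤ μ i - α := by have := hμα i; linarith
    have := mul_nonneg h0 hnn
    simp only [smul_eq_mul, neg_smul, neg_mul]
    linarith
  -- the shifted LMI quadratic form is negative
  have hLform : ∀ (i : Fin N) (u : Fin 3 ⊕ (Fin 1 ⊕ Fin 1) → ℂ), u ≠ 0 →
      (star u ⬝ᵥ ((Li i).map (Complex.ofReal : ℝ → ℂ) *ᵥ u)).re < 0 := by
    intro i u hu
    rw [hLidef]
    show (star u ⬝ᵥ ((LMI + Ei i).map (Complex.ofReal : ℝ → ℂ) *ᵥ u)).re < 0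
    rw [cmap_add, Matrix.add_mulVec, dotProduct_add, Complex.add_re]
    have h1 := neg_form hneg hu
    have h2 : (star u ⬝ᵥ ((Ei i).map (Complex.ofReal : ℝ → ℂ) *ᵥ u)).re ≤ 0 := by
      rw [re_form]
      exact add_nonpos (hEform i _) (hEform i _)
    linarith
  -- complexified inverses
  have hQcPc : Q.map (Complex.ofReal : ℝ → ℂ) * P.map Complex.ofReal = 1 := by
    rw [← cmap_mul, hQP, cmap_one]
  have hPcQc : P.map (Complex.ofReal : ℝ → ℂ) * Q.map Complex.ofReal = 1 := by
    rw [← cmap_mul, hPQ, cmap_one]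
  -- main eigenvalue lemma
  have key : ∀ (i : Fin N) (z : ℂ) (v : Fin 3 → ℂ), v ≠ 0 →
      ((Ai i).map (Complex.ofReal : ℝ → ℂ)) *ᵥ v = z • v → z.re < 0 := by
    intro i z v hv hei
    set w : Fin 3 → ℂ := P.map Complex.ofReal *ᵥ v with hwdef
    have hw : w ≠ 0 := by
      intro h0
      apply hv
      have hqw : Q.map (Complex.ofReal : ℝ → ℂ) *ᵥ w = v := by
        rw [hwdef, Matrix.mulVec_mulVec, hQcPc, Matrix.one_mulVec]
      rw [← hqw, h0, Matrix.mulVec_zero]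
    set u : (Fin 3 ⊕ (Fin 1 ⊕ Fin 1)) → ℂ := Sum.elim w 0 with hudef
    have hu : u ≠ 0 := by
      intro h0
      apply hw
      funext a
      exact congrFun h0 (Sum.inl a)
    have hform := hLform i u hu
    have hmap : (Li i).map (Complex.ofReal : ℝ → ℂ) = Matrix.fromBlocks
        ((Ai i * Q + Q * (Ai i)ᵀ).map Complex.ofReal)
        ((Matrix.fromCols B2 (Q * C1ᵀ)).map Complex.ofReal)
        ((Matrix.fromRows B2ᵀ (C1 * Q)).map Complex.ofReal)
        ((Matrix.fromBlocks (-(γd ^ 2) • (1 : Matrix (Fin 1) (Fin 1) ℝ)) 0 0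
          (-1 : Matrix (Fin 1) (Fin 1) ℝ)).map Complex.ofReal) := by
      rw [hLi i, Matrix.fromBlocks_map]
    have hstaru : star u = Sum.elim (star w) 0 := by
      rw [hudef, Function.star_sumElim, star_zero]
    rw [hmap, hudef, Matrix.fromBlocks_mulVec] at hform
    rw [hudef] at hstaru
    rw [hstaru] at hform
    simp only [Sum.elim_comp_inl, Sum.elim_comp_inr, Matrix.mulVec_zero, add_zero,
      sumElim_dotProduct_sumElim, zero_dotProduct, zero_add] at hform
    -- now hform : (star w ⬝ᵥ ((Ai i * Q + Q * (Ai i)ᵀ).map ofReal *ᵥ w)).re < 0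
    have hq : star w ⬝ᵥ ((Ai i * Q + Q * (Ai i)ᵀ).map (Complex.ofReal : ℝ → ℂ) *ᵥ w)
        = (z + (starRingEnd ℂ) z) * (star v ⬝ᵥ (P.map Complex.ofReal *ᵥ v)) := by
      have hsw : star w = P.map (Complex.ofReal : ℝ → ℂ) *ᵥ star v := by
        rw [hwdef, star_cmap_mulVec]
      have hMP : (Ai i * Q + Q * (Ai i)ᵀ) * P = Ai i + Q * ((Ai i)ᵀ * P) := by
        rw [Matrix.add_mul, Matrix.mul_assoc (Ai i) Q P, hQP, Matrix.mul_one,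
          Matrix.mul_assoc Q ((Ai i)ᵀ) P]
      have hmv : (Ai i * Q + Q * (Ai i)ᵀ).map (Complex.ofReal : ℝ → ℂ) *ᵥ w
          = (Ai i).map Complex.ofReal *ᵥ v
            + (Q * ((Ai i)ᵀ * P)).map Complex.ofReal *ᵥ v := by
        rw [hwdef, Matrix.mulVec_mulVec, ← cmap_mul, hMP, cmap_add, Matrix.add_mulVec]
      rw [hmv, dotProduct_add, hei]
      have t1 : star w ⬝ᵥ (z • v) = z * (star v ⬝ᵥ (P.map (Complex.ofReal : ℝ → ℂ) *ᵥ v)) := by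
        rw [dotProduct_smul, hsw, mulVec_dot_comm, ← cmap_transpose, hPsym]
        simp [smul_eq_mul]
      have t2 : star w ⬝ᵥ ((Q * ((Ai i)ᵀ * P)).map (Complex.ofReal : ℝ → ℂ) *ᵥ v)
          = (starRingEnd ℂ) z * (star v ⬝ᵥ (P.map Complex.ofReal *ᵥ v)) := by
        rw [hsw, mulVec_dot_comm]
        have : ((P.map (Complex.ofReal : ℝ → ℂ))ᵀ * ((Q * ((Ai i)ᵀ * P)).map Complex.ofReal))
            = ((Ai i)ᵀ).map Complex.ofReal * P.map Complex.ofReal := by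
          rw [← cmap_transpose, hPsym, ← cmap_mul, ← Matrix.mul_assoc, hPQ, Matrix.one_mul,
            cmap_mul]
        rw [Matrix.mulVec_mulVec, this, ← Matrix.mulVec_mulVec, cmap_transpose,
          ← mulVec_dot_comm, ← star_cmap_mulVec, hei]
        rw [star_smul, smul_dotProduct]
        simp [smul_eq_mul]
      rw [t1, t2]
      ring
    rw [hq] at hform
    have hqpos := pos_form hP hv
    rw [Complex.add_conj] at hform
    rw [Complex.re_ofReal_mul] at hform
    nlinarith
  constructor
  · intro z hz
    set Ac3 := A.map (Complex.ofReal : ℝ → ℂ) with hAc3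
    set Kc := K.map (Complex.ofReal : ℝ → ℂ) with hKc
    set Vc := V.map (Complex.ofReal : ℝ → ℂ) with hVc
    set V'c := (V⁻¹).map (Complex.ofReal : ℝ → ℂ) with hV'c
    set Lc : Matrix (Fin N) (Fin N) ℂ := Matrix.diagonal (fun i => (lam i : ℂ)) with hLc
    have hVV' : Vc * V'c = 1 := by
      rw [hVc, hV'c, ← cmap_mul, Matrix.mul_nonsing_inv V hV, cmap_one]
    have hdiagmap : (Matrix.diagonal lam).map (Complex.ofReal : ℝ → ℂ) = Lc := by
      rw [Matrix.diagonal_map (by simp)]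
    have hMc : M.map (Complex.ofReal : ℝ → ℂ) = Vc * Lc * V'c := by
      rw [hM, cmap_mul, cmap_mul, hdiagmap]
    have hkron : ∀ (X : Matrix (Fin N) (Fin N) ℝ) (Y : Matrix (Fin 3) (Fin 3) ℝ),
        (X ⊗ₖ Y).map (Complex.ofReal : ℝ → ℂ)
          = (X.map Complex.ofReal) ⊗ₖ (Y.map Complex.ofReal) := by
      intro X Y
      ext ⟨i, a⟩ ⟨j, b⟩
      simp [Matrix.kroneckerMap_apply]
    have hAcm : Ac.map (Complex.ofReal : ℝ → ℂ)
        = (1 : Matrix (Fin N) (Fin N) ℂ) ⊗ₖ Ac3 - (Vc * Lc * V'c) ⊗ₖ ((c : ℂ) • Kc) := by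
      rw [hAc, cmap_sub, cmap_smul, hkron, hkron, cmap_one, hMc, Matrix.kronecker_smul]
    set D : Matrix (Fin N × Fin 3) (Fin N × Fin 3) ℂ :=
      z • 1 - (1 : Matrix (Fin N) (Fin N) ℂ) ⊗ₖ Ac3 + Lc ⊗ₖ ((c : ℂ) • Kc) with hD
    set W := Vc ⊗ₖ (1 : Matrix (Fin 3) (Fin 3) ℂ) with hW
    set W' := V'c ⊗ₖ (1 : Matrix (Fin 3) (Fin 3) ℂ) with hW'
    have hWW' : W * W' = 1 := by
      rw [hW, hW', ← Matrix.mul_kronecker_mul, hVV']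
      simp [Matrix.one_kronecker_one]
    have e1 : W * (z • (1 : Matrix (Fin N × Fin 3) (Fin N × Fin 3) ℂ)) * W' = z • 1 := by
      rw [Matrix.mul_smul, Matrix.mul_one, Matrix.smul_mul, hWW']
    have e2 : W * ((1 : Matrix (Fin N) (Fin N) ℂ) ⊗ₖ Ac3) * W'
        = (1 : Matrix (Fin N) (Fin N) ℂ) ⊗ₖ Ac3 := by
      rw [hW, hW', ← Matrix.mul_kronecker_mul, ← Matrix.mul_kronecker_mul]
      simp [hVV']
    have e3 : W * (Lc ⊗ₖ ((c : ℂ) • Kc)) * W' = (Vc * Lc * V'c) ⊗ₖ ((c : ℂ) • Kc) := by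
      rw [hW, hW', ← Matrix.mul_kronecker_mul, ← Matrix.mul_kronecker_mul]
      simp
    have hconj : z • (1 : Matrix (Fin N × Fin 3) (Fin N × Fin 3) ℂ)
        - Ac.map (Complex.ofReal : ℝ → ℂ) = W * D * W' := by
      have hexp : W * D * W' = W * (z • (1 : Matrix (Fin N × Fin 3) (Fin N × Fin 3) ℂ)) * W'
          - W * ((1 : Matrix (Fin N) (Fin N) ℂ) ⊗ₖ Ac3) * W'
          + W * (Lc ⊗ₖ ((c : ℂ) • Kc)) * W' := by
        rw [hD]
        noncomm_ring
      rw [hexp, e1, e2, e3, hAcm]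
      abel
    have hdetfac : (z • (1 : Matrix (Fin N × Fin 3) (Fin N × Fin 3) ℂ)
        - Ac.map (Complex.ofReal : ℝ → ℂ)).det = D.det := by
      rw [hconj, Matrix.det_mul, Matrix.det_mul]
      have hcomm : W.det * D.det * W'.det = (W.det * W'.det) * D.det := by ring
      rw [hcomm, ← Matrix.det_mul, hWW', Matrix.det_one, one_mul]
    set Mi : Fin N → Matrix (Fin 3) (Fin 3) ℂ :=
      fun i => z • 1 - Ac3 + ((c : ℂ) * (lam i : ℂ)) • Kc with hMi
    have hDblock : D = (Matrix.blockDiagonal (fun i => Mi i)).submatrix Prod.swap Prod.swap := by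
      ext ⟨i, a⟩ ⟨j, b⟩
      simp only [hD, Matrix.submatrix_apply, Prod.swap_prod_mk, Matrix.blockDiagonal_apply, hMi]
      by_cases hij : i = j
      · subst hij
        simp [Matrix.one_apply, Matrix.kroneckerMap_apply, hLc, Matrix.diagonal_apply_eq,
          Prod.ext_iff, Matrix.smul_apply, Matrix.sub_apply, Matrix.add_apply]
        ring
      · simp [Matrix.one_apply, Matrix.kroneckerMap_apply, hLc, Matrix.diagonal_apply_ne _ hij,
          Prod.ext_iff, hij, Matrix.smul_apply, Matrix.sub_apply, Matrix.add_apply, Ne.symm hij]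
    have hdetD : D.det = ∏ i, (Mi i).det := by
      rw [hDblock]
      rw [show (Prod.swap : Fin N × Fin 3 → Fin 3 × Fin N)
        = ⇑(Equiv.prodComm (Fin N) (Fin 3)) from rfl]
      rw [Matrix.det_submatrix_equiv_self, Matrix.det_blockDiagonal]
    have hdet0 : (∏ i, (Mi i).det) = 0 := by
      have h2 : Ac.map (Complex.ofReal : ℝ → ℂ) = Ac.map (algebraMap ℝ ℂ) := by
        ext i j
        simp [Matrix.map_apply]
      have h1 : (Ac.map (Complex.ofReal : ℝ → ℂ)).charpoly.eval z = 0 := by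
        rw [h2, Matrix.charpoly_map]
        exact hz
      rw [charpoly_eval, hdetfac, hdetD] at h1
      exact h1
    obtain ⟨i, -, hi⟩ := Finset.prod_eq_zero_iff.mp hdet0
    obtain ⟨v, hv0, hveq⟩ := (Matrix.exists_mulVec_eq_zero_iff).mpr hi
    apply key i z v hv0
    have hAic : (Ai i).map (Complex.ofReal : ℝ → ℂ) = Ac3 - ((c : ℂ) * (lam i : ℂ)) • Kc := by
      show (A - μ i • K).map _ = _
      rw [cmap_sub, cmap_smul]
      norm_cast
    rw [hMi] at hveq
    rw [hAic]
    rw [Matrix.add_mulVec, Matrix.sub_mulVec, Matrix.smul_mulVec,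
      Matrix.smul_mulVec, Matrix.one_mulVec] at hveq
    rw [Matrix.sub_mulVec, Matrix.smul_mulVec]
    funext a
    have hva := congrFun hveq a
    simp only [Pi.add_apply, Pi.sub_apply, Pi.smul_apply, Pi.zero_apply, smul_eq_mul] at hva ⊢
    linear_combination -hva
  · intro ω i
    set z : ℂ := Complex.I * (ω : ℂ) with hzdef
    have hzsum : z + (starRingEnd ℂ) z = 0 := by
      rw [hzdef]
      simp [Complex.ext_iff]
    have hAicm : (Ai i).map (Complex.ofReal : ℝ → ℂ)
        = A.map Complex.ofReal - ((μ i : ℝ) : ℂ) • K.map Complex.ofReal := by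
      show (A - μ i • K).map _ = _
      rw [cmap_sub, cmap_smul]
    have hgm : (Complex.I * (ω : ℂ)) • (1 : Matrix (Fin 3) (Fin 3) ℂ) - A.map Complex.ofReal
        + (c * lam i) • (B1 * kT).map (Complex.ofReal : ℝ → ℂ)
        = z • (1 : Matrix (Fin 3) (Fin 3) ℂ) - (Ai i).map (Complex.ofReal : ℝ → ℂ) := by
      rw [hAicm, ← hKdef, ← hzdef]
      ext a b
      simp only [Matrix.sub_apply, Matrix.add_apply, Matrix.smul_apply, smul_eq_mul,
        Complex.real_smul]
      push_cast [hμdef]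
      ring
    rw [hgm]
    set Sm : Matrix (Fin 3) (Fin 3) ℂ :=
      z • (1 : Matrix (Fin 3) (Fin 3) ℂ) - (Ai i).map (Complex.ofReal : ℝ → ℂ) with hSmdef
    have hdet : Sm.det ≠ 0 := by
      intro h0
      obtain ⟨v, hv0, hveq⟩ := (Matrix.exists_mulVec_eq_zero_iff).mpr h0
      have heig : (Ai i).map (Complex.ofReal : ℝ → ℂ) *ᵥ v = z • v := by
        rw [hSmdef, Matrix.sub_mulVec, Matrix.smul_mulVec, Matrix.one_mulVec] at hveq
        funext a
        have h3 := congrFun hveq a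
        simp only [Pi.sub_apply, Pi.smul_apply, Pi.zero_apply, smul_eq_mul] at h3 ⊢
        linear_combination -h3
      have h4 := key i z v hv0 heig
      rw [hzdef] at h4
      simp at h4
    refine ⟨isUnit_iff_ne_zero.mpr hdet, ?_⟩
    set b : Fin 3 → ℂ := fun a => ((B2 a 0 : ℝ) : ℂ) with hb
    have hstarb : star b = b := by
      funext a
      simp [hb]
    set x : Fin 3 → ℂ := Sm⁻¹ *ᵥ b with hx
    have hSx : Sm *ᵥ x = b := by
      rw [hx, Matrix.mulVec_mulVec, Matrix.mul_nonsing_inv _ (isUnit_iff_ne_zero.mpr hdet),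
        Matrix.one_mulVec]
    have hAx : (Ai i).map (Complex.ofReal : ℝ → ℂ) *ᵥ x = z • x - b := by
      rw [hSmdef, Matrix.sub_mulVec, Matrix.smul_mulVec, Matrix.one_mulVec] at hSx
      funext a
      have h3 := congrFun hSx a
      simp only [Pi.sub_apply, Pi.smul_apply, smul_eq_mul] at h3 ⊢
      linear_combination -h3
    set cv : Fin 3 → ℂ := fun a => ((C1 0 a : ℝ) : ℂ) with hcv
    set g : ℂ := cv ⬝ᵥ x with hgdef
    have hgoal : (C1.map (Complex.ofReal : ℝ → ℂ) * Sm⁻¹ * B2.map Complex.ofReal) 0 0 = g := by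
      rw [hgdef, hx]
      simp only [Matrix.mul_apply, Matrix.mulVec, dotProduct, Matrix.map_apply, hcv, hb]
      simp_rw [Finset.sum_mul, Finset.mul_sum]
      rw [Finset.sum_comm]
      refine Finset.sum_congr rfl fun a _ => Finset.sum_congr rfl fun b' _ => by ring
    rw [hgoal]
    set e1 : Fin 1 → ℂ := fun _ => 1 with he1
    set g1 : Fin 1 → ℂ := fun _ => g with hg1
    set u1 : Fin 3 → ℂ := P.map (Complex.ofReal : ℝ → ℂ) *ᵥ x with hu1
    set u : (Fin 3 ⊕ (Fin 1 ⊕ Fin 1)) → ℂ := Sum.elim u1 (Sum.elim e1 g1) with hudef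
    have hu : u ≠ 0 := by
      intro h0
      have h3 := congrFun h0 (Sum.inr (Sum.inl 0))
      rw [hudef] at h3
      simp [he1] at h3
    have hform := hLform i u hu
    have hsu1 : star u1 = P.map (Complex.ofReal : ℝ → ℂ) *ᵥ star x := by
      rw [hu1, star_cmap_mulVec]
    have hdotP : ∀ y : Fin 3 → ℂ, star u1 ⬝ᵥ y = star x ⬝ᵥ (P.map (Complex.ofReal : ℝ → ℂ) *ᵥ y) := by
      intro y
      rw [hsu1, mulVec_dot_comm, ← cmap_transpose, hPsym]
    set q : ℂ := star x ⬝ᵥ (P.map (Complex.ofReal : ℝ → ℂ) *ᵥ x) with hq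
    -- individual terms
    have tM11 : star u1 ⬝ᵥ ((Ai i * Q + Q * (Ai i)ᵀ).map (Complex.ofReal : ℝ → ℂ) *ᵥ u1)
        = (z + (starRingEnd ℂ) z) * q
          - (star x ⬝ᵥ (P.map Complex.ofReal *ᵥ b)) - (b ⬝ᵥ (P.map Complex.ofReal *ᵥ x)) := by
      have hMP : (Ai i * Q + Q * (Ai i)ᵀ) * P = Ai i + Q * ((Ai i)ᵀ * P) := by
        rw [Matrix.add_mul, Matrix.mul_assoc (Ai i) Q P, hQP, Matrix.mul_one,
          Matrix.mul_assoc Q ((Ai i)ᵀ) P]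
      have hmv : (Ai i * Q + Q * (Ai i)ᵀ).map (Complex.ofReal : ℝ → ℂ) *ᵥ u1
          = (Ai i).map Complex.ofReal *ᵥ x
            + (Q * ((Ai i)ᵀ * P)).map Complex.ofReal *ᵥ x := by
        rw [hu1, Matrix.mulVec_mulVec, ← cmap_mul, hMP, cmap_add, Matrix.add_mulVec]
      rw [hmv, dotProduct_add, hAx]
      have t1 : star u1 ⬝ᵥ (z • x - b) = z * q - star x ⬝ᵥ (P.map Complex.ofReal *ᵥ b) := by
        rw [dotProduct_sub, dotProduct_smul, hdotP x, hdotP b, ← hq]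
        simp [smul_eq_mul]
      have t2 : star u1 ⬝ᵥ ((Q * ((Ai i)ᵀ * P)).map (Complex.ofReal : ℝ → ℂ) *ᵥ x)
          = (starRingEnd ℂ) z * q - b ⬝ᵥ (P.map Complex.ofReal *ᵥ x) := by
        rw [hsu1, mulVec_dot_comm]
        have hmm : ((P.map (Complex.ofReal : ℝ → ℂ))ᵀ * ((Q * ((Ai i)ᵀ * P)).map Complex.ofReal))
            = ((Ai i)ᵀ).map Complex.ofReal * P.map Complex.ofReal := by
          rw [← cmap_transpose, hPsym, ← cmap_mul, ← Matrix.mul_assoc, hPQ, Matrix.one_mul,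
            cmap_mul]
        rw [Matrix.mulVec_mulVec, hmm, ← Matrix.mulVec_mulVec, cmap_transpose,
          ← mulVec_dot_comm, ← star_cmap_mulVec, hAx]
        rw [star_sub, star_smul, hstarb, sub_dotProduct, smul_dotProduct, ← hq]
        simp [smul_eq_mul]
      rw [t1, t2]
      ring
    have hB2e : B2.map (Complex.ofReal : ℝ → ℂ) *ᵥ e1 = b := by
      funext a
      simp [Matrix.mulVec, dotProduct, he1, hb]
    have tB2e : star u1 ⬝ᵥ (B2.map (Complex.ofReal : ℝ → ℂ) *ᵥ e1)
        = star x ⬝ᵥ (P.map Complex.ofReal *ᵥ b) := by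
      rw [hB2e, hdotP b]
    have hg1e : g1 = g • e1 := by
      funext j
      simp [hg1, he1]
    have hC1Te : (C1ᵀ).map (Complex.ofReal : ℝ → ℂ) *ᵥ e1 = cv := by
      funext a
      simp [Matrix.mulVec, dotProduct, he1, hcv]
    have tQC1 : star u1 ⬝ᵥ ((Q * C1ᵀ).map (Complex.ofReal : ℝ → ℂ) *ᵥ g1)
        = g * (starRingEnd ℂ) g := by
      rw [hg1e, Matrix.mulVec_smul, dotProduct_smul, hdotP, Matrix.mulVec_mulVec,
        ← cmap_mul, ← Matrix.mul_assoc, hPQ, Matrix.one_mul, hC1Te]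
      have : star x ⬝ᵥ cv = (starRingEnd ℂ) g := by
        rw [hcv, conj_dot_real, ← hcv, ← hgdef]
      rw [this]
      simp [smul_eq_mul]
    have tRows : star e1 ⬝ᵥ (B2ᵀ.map (Complex.ofReal : ℝ → ℂ) *ᵥ u1)
        = b ⬝ᵥ (P.map Complex.ofReal *ᵥ x) := by
      have h5 : B2ᵀ.map (Complex.ofReal : ℝ → ℂ) *ᵥ u1 = fun _ => b ⬝ᵥ u1 := by
        funext j
        have hj : j = 0 := Subsingleton.elim _ _
        subst hj
        simp [Matrix.mulVec, dotProduct, hb]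
      rw [h5, ← hu1]
      simp [dotProduct, he1, hu1]
    have tC1Q : star g1 ⬝ᵥ ((C1 * Q).map (Complex.ofReal : ℝ → ℂ) *ᵥ u1)
        = (starRingEnd ℂ) g * g := by
      have h5 : (C1 * Q).map (Complex.ofReal : ℝ → ℂ) *ᵥ u1 = C1.map Complex.ofReal *ᵥ x := by
        rw [hu1, Matrix.mulVec_mulVec, ← cmap_mul, Matrix.mul_assoc, hQP, Matrix.mul_one]
      have h6 : (C1.map (Complex.ofReal : ℝ → ℂ) *ᵥ x) = fun _ => g := by
        funext j
        have hj : j = 0 := Subsingleton.elim _ _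
        subst hj
        simp [Matrix.mulVec, dotProduct, hgdef, hcv]
      rw [h5, h6]
      simp [dotProduct, hg1]
    have td1 : star e1 ⬝ᵥ (((-(γd ^ 2)) • (1 : Matrix (Fin 1) (Fin 1) ℝ)).map
        (Complex.ofReal : ℝ → ℂ) *ᵥ e1) = -((γd ^ 2 : ℝ) : ℂ) := by
      simp [Matrix.mulVec, dotProduct, he1, Matrix.smul_apply, Matrix.one_apply]
    have td2 : star g1 ⬝ᵥ ((-1 : Matrix (Fin 1) (Fin 1) ℝ).map
        (Complex.ofReal : ℝ → ℂ) *ᵥ g1) = (starRingEnd ℂ) g * (-g) := by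
      simp [Matrix.mulVec, dotProduct, hg1, Matrix.one_apply]
    -- assemble
    have htot : star u ⬝ᵥ ((Li i).map (Complex.ofReal : ℝ → ℂ) *ᵥ u)
        = g * (starRingEnd ℂ) g - ((γd ^ 2 : ℝ) : ℂ) := by
      rw [hLi i, Matrix.fromBlocks_map, cmap_fromColumns, cmap_fromRows, Matrix.fromBlocks_map,
        cmap_zero]
      rw [hudef, Function.star_sumElim, Function.star_sumElim, Matrix.fromBlocks_mulVec]
      simp only [Sum.elim_comp_inl, Sum.elim_comp_inr]
      rw [Matrix.fromCols_mulVec_sumElim, Matrix.fromRows_mulVec, Matrix.fromBlocks_mulVec]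
      simp only [Sum.elim_comp_inl, Sum.elim_comp_inr, Matrix.zero_mulVec, add_zero, zero_add]
      rw [sum_elim_add, sumElim_dotProduct_sumElim, sumElim_dotProduct_sumElim]
      rw [dotProduct_add, dotProduct_add, dotProduct_add,
        dotProduct_add]
      rw [tM11, tB2e, tQC1, tRows, tC1Q, td1, td2]
      rw [hzsum]
      ring
    rw [htot] at hform
    rw [Complex.mul_conj] at hform
    have hre : ((↑(Complex.normSq g) : ℂ) - ((γd ^ 2 : ℝ) : ℂ)).re
        = Complex.normSq g - γd ^ 2 := by
      rw [Complex.sub_re, Complex.ofReal_re, Complex.ofReal_re]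
    rw [hre] at hform
    have habs : ‖g‖ ^ 2 = Complex.normSq g := Complex.sq_norm g
    nlinarith [norm_nonneg g]
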